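/- arXiv:2208.06995 — 3 statements merged into one kernel-verified Lean document; each statement's English description precedes it below -/
import Mathlib

section
/- Let f : ℝ^m → ℝⁿ be the map f(x)ᵢ = max(0, wᵢᵀx + bᵢ), let lᵢ = {x : wᵢᵀx + bᵢ = 0}, and suppose a finite set D ⊆ ℝ^m satisfies wᵢᵀx + bᵢ > 0 for all x ∈ D and all i. If D is contained in an affine subspace l_D that is disjoint from every lᵢ (i.e. parallel to each lᵢ), then f maps all elements of D to a single point. -/
theorem stmt2 (m n : ℕ)
    (w : Fin n → (Fin m → ℝ)) (b : Fin n → ℝ)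
    (f : (Fin m → ℝ) → (Fin n → ℝ))
    (hf : ∀ x i, f x i = max 0 (∑ j, w i j * x j + b i))
    (D : Finset (Fin m → ℝ))
    (hpos : ∀ x ∈ D, ∀ i, 0 < ∑ j, w i j * x j + b i)
    (A : AffineSubspace ℝ (Fin m → ℝ))
    (hDA : ↑D ⊆ (A : Set (Fin m → ℝ)))
    (hpar : ∀ i, (A : Set (Fin m → ℝ)) ∩ {x | ∑ j, w i j * x j + b i = 0} = ∅) :
    ∀ x ∈ D, ∀ y ∈ D, f x = f y := by
  intro x hx y hy
  have hxA : x ∈ A := hDA hx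
  have hyA : y ∈ A := hDA hy
  funext i
  rw [hf, hf]
  have key : ∑ j, w i j * x j + b i = ∑ j, w i j * y j + b i := by
    by_contra hne
    set Sx := ∑ j, w i j * x j with hSx
    set Sy := ∑ j, w i j * y j with hSy
    have hd : (Sx + b i) - (Sy + b i) ≠ 0 := sub_ne_zero.mpr hne
    set t : ℝ := (Sx + b i) / ((Sx + b i) - (Sy + b i)) with ht
    have hmem : t • (y -ᵥ x) +ᵥ x ∈ A := A.smul_vsub_vadd_mem t hyA hxA hxA
    have h0 : ∑ j, w i j * ((t • (y -ᵥ x) +ᵥ x) j) + b i = 0 := by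
      have hterm : ∀ j ∈ Finset.univ, w i j * ((t • (y -ᵥ x) +ᵥ x) j)
          = (t * (w i j * y j) - t * (w i j * x j)) + w i j * x j := by
        intro j _
        have : (t • (y -ᵥ x) +ᵥ x) j = t * (y j - x j) + x j := by
          simp [vsub_eq_sub, vadd_eq_add]
        rw [this]; ring
      rw [Finset.sum_congr rfl hterm, Finset.sum_add_distrib, Finset.sum_sub_distrib,
        ← Finset.mul_sum, ← Finset.mul_sum, ← hSx, ← hSy, ht]
      have hd' : Sx - Sy ≠ 0 := by intro h; exact hd (by linarith)
      field_simp
      ring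
    have := Set.eq_empty_iff_forall_notMem.mp (hpar i) (t • (y -ᵥ x) +ᵥ x)
    exact this ⟨hmem, h0⟩
  rw [key]
end

section
/- For any finite set D ⊆ ℝ^m with |D| ≥ 2, there exist w ∈ ℝ^m, w ≠ 0, and b ∈ ℝ such that the map x ↦ max(0, wᵀx + b) is injective on D (i.e. the hyperplane wᵀx + b = 0 discriminates D). -/
lemma aux_sum_mul_self_ne_zero {m : ℕ} {v : Fin m → ℝ} (hv : v ≠ 0) :
    (∑ j, v j * v j) ≠ 0 := by
  intro h
  apply hv
  funext j
  have h0 : ∀ i ∈ Finset.univ, (0:ℝ) ≤ v i * v i := fun i _ => mul_self_nonneg _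
  have := (Finset.sum_eq_zero_iff_of_nonneg h0).mp h j (Finset.mem_univ j)
  exact mul_self_eq_zero.mp this

lemma aux_exists_generic {m : ℕ} (hm : 0 < m) (S : Finset (Fin m → ℝ))
    (hS : ∀ v ∈ S, v ≠ 0) :
    ∃ w : Fin m → ℝ, w ≠ 0 ∧ ∀ v ∈ S, (∑ j, w j * v j) ≠ 0 := by
  classical
  induction S using Finset.induction with
  | empty =>
    refine ⟨fun _ => 1, ?_, by simp⟩
    intro h
    have := congrFun h ⟨0, hm⟩
    simp at this
  | insert _ _ hvS ih =>
    rename_i v S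
    have hv : v ≠ 0 := hS v (Finset.mem_insert_self v S)
    obtain ⟨w, hw0, hw⟩ := ih (fun u hu => hS u (Finset.mem_insert_of_mem hu))
    obtain ⟨t, ht⟩ := Infinite.exists_notMem_finset
      ((insert v S).image fun u => -(∑ j, w j * u j) / (∑ j, v j * u j))
    have hdot : ∀ u : Fin m → ℝ,
        (∑ j, (w + t • v) j * u j) = (∑ j, w j * u j) + t * ∑ j, v j * u j := by
      intro u
      simp [add_mul, Finset.sum_add_distrib, Finset.mul_sum, mul_assoc]
    have key : ∀ u ∈ insert v S, (∑ j, (w + t • v) j * u j) ≠ 0 := by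
      intro u hu
      rw [hdot]
      by_cases hvu : (∑ j, v j * u j) = 0
      · rw [hvu, mul_zero, add_zero]
        rcases Finset.mem_insert.mp hu with rfl | hu'
        · exact absurd hvu (aux_sum_mul_self_ne_zero hv)
        · exact hw u hu'
      · intro h
        apply ht
        refine Finset.mem_image.mpr ⟨u, hu, ?_⟩
        rw [div_eq_iff hvu]
        linarith
    refine ⟨w + t • v, ?_, key⟩
    intro h0
    have hz : ∀ j, w j + t * v j = 0 := fun j => by simpa using congrFun h0 j
    exact key v (Finset.mem_insert_self v S) (by simp [hz])

theorem stmt8 (m : ℕ) (D : Finset (Fin m → ℝ)) (hcard : 2 ≤ D.card) :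
    ∃ (w : Fin m → ℝ) (b : ℝ), w ≠ 0 ∧
      Set.InjOn (fun x : Fin m → ℝ => max 0 (∑ j, w j * x j + b)) D := by
  classical
  have hm : 0 < m := by
    rcases Nat.eq_zero_or_pos m with rfl | hm
    · exfalso
      have : D.card ≤ 1 := Finset.card_le_one.mpr fun a _ b _ => Subsingleton.elim a b
      omega
    · exact hm
  set S : Finset (Fin m → ℝ) :=
    ((D ×ˢ D).filter fun p => p.1 ≠ p.2).image fun p => p.1 - p.2 with hSdef
  have hS : ∀ v ∈ S, v ≠ 0 := by
    intro v hv
    obtain ⟨p, hp, rfl⟩ := Finset.mem_image.mp hv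
    exact sub_ne_zero.mpr (Finset.mem_filter.mp hp).2
  obtain ⟨w, hw0, hw⟩ := aux_exists_generic hm S hS
  set b : ℝ := 1 + ∑ x ∈ D, |∑ j, w j * x j| with hbdef
  have hpos : ∀ x ∈ D, 0 < ∑ j, w j * x j + b := by
    intro x hx
    have h1 : |∑ j, w j * x j| ≤ ∑ y ∈ D, |∑ j, w j * y j| :=
      Finset.single_le_sum (f := fun y => |∑ j, w j * y j|) (fun y _ => abs_nonneg _) hx
    have h2 : -|∑ j, w j * x j| ≤ ∑ j, w j * x j := neg_abs_le _
    rw [hbdef]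
    linarith
  refine ⟨w, b, hw0, ?_⟩
  intro x hx y hy h
  by_contra hne
  have hmem : x - y ∈ S := by
    refine Finset.mem_image.mpr ⟨(x, y), ?_, rfl⟩
    exact Finset.mem_filter.mpr ⟨Finset.mem_product.mpr ⟨hx, hy⟩, hne⟩
  apply hw (x - y) hmem
  simp only [max_eq_right (hpos x hx).le, max_eq_right (hpos y hy).le] at h
  have hxy : (∑ j, w j * x j) = ∑ j, w j * y j := by linarith
  have : (∑ j, w j * (x - y) j) = (∑ j, w j * x j) - ∑ j, w j * y j := by
    simp [mul_sub, Finset.sum_sub_distrib]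
  rw [this, hxy, sub_self]
end

section
/- For any finite set D ⊆ ℝ^m with m ≥ 2 and any integers n_e, d with 1 ≤ n_e < m and a chain m > n₁ > n₂ > … > n_d > n_e, there exist affine-plus-ReLU maps f_j : ℝ^{n_{j-1}} → ℝ^{n_j} (with n₀ = m, n_{d+1} = n_e), each of the form x ↦ max(0, Wx + b) applied coordinatewise, such that the composite f = f_{d+1} ∘ ⋯ ∘ f₁ is injective on D. -/
noncomputable def funL {p : ℕ} (v : Fin p → ℝ) : (Fin p → ℝ) →ₗ[ℝ] ℝ :=
  ∑ k, v k • LinearMap.proj k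

lemma funL_apply {p : ℕ} (v w : Fin p → ℝ) : funL v w = ∑ k, v k * w k := by
  simp [funL]

lemma exists_functional (p : ℕ) (S : Finset (Fin p → ℝ)) :
    ∃ w : Fin p → ℝ, ∀ x ∈ S, ∀ y ∈ S,
      (∑ k, w k * x k) = (∑ k, w k * y k) → x = y := by
  by_contra h
  push_neg at h
  set T := (S ×ˢ S).filter (fun pr => pr.1 ≠ pr.2) with hT
  have hcov : ⋃ i : T, ((LinearMap.ker (funL (i.1.1 - i.1.2)) : Submodule ℝ (Fin p → ℝ)) : Set (Fin p → ℝ)) = Set.univ := by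
    ext w
    simp only [Set.mem_iUnion, Set.mem_univ, iff_true]
    obtain ⟨x, hx, y, hy, hsum, hne⟩ := h w
    refine ⟨⟨(x, y), ?_⟩, ?_⟩
    · simp [hT, Finset.mem_filter, Finset.mem_product, hx, hy, hne]
    · simp only [SetLike.mem_coe, LinearMap.mem_ker]
      rw [funL_apply]
      simp only [Pi.sub_apply, sub_mul]
      rw [Finset.sum_sub_distrib]
      have : ∀ z : Fin p → ℝ, ∑ k, z k * w k = ∑ k, w k * z k := by
        intro z; exact Finset.sum_congr rfl (fun k _ => mul_comm _ _)
      rw [this x, this y, hsum, sub_self]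
  obtain ⟨i, hi⟩ := Subspace.exists_eq_top_of_iUnion_eq_univ hcov
  have hmem : i.1 ∈ Finset.filter (fun pr => pr.1 ≠ pr.2) (S ×ˢ S) := i.2
  rw [Finset.mem_filter, Finset.mem_product] at hmem
  obtain ⟨⟨hx, hy⟩, hne⟩ := hmem
  set v := i.1.1 - i.1.2 with hv
  have hv0 : funL v v = 0 := by
    have : v ∈ LinearMap.ker (funL v) := by rw [hi]; trivial
    exact this
  rw [funL_apply] at hv0
  have hvz : v = 0 := by
    funext k
    have h1 : ∀ k ∈ Finset.univ, (0:ℝ) ≤ v k * v k := fun k _ => mul_self_nonneg _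
    have := (Finset.sum_eq_zero_iff_of_nonneg h1).mp hv0 k (Finset.mem_univ k)
    exact mul_self_eq_zero.mp this
  exact hne (sub_eq_zero.mp hvz)

lemma layer_exists (p q : ℕ) (hq : 0 < q) (S : Finset (Fin p → ℝ)) :
    ∃ f : (Fin p → ℝ) → (Fin q → ℝ),
      (∃ (W : Fin q → Fin p → ℝ) (b : Fin q → ℝ),
        ∀ x i, f x i = max 0 (∑ k, W i k * x k + b i)) ∧ Set.InjOn f S := by
  obtain ⟨w, hw⟩ := exists_functional p S
  obtain ⟨M, hM⟩ := (S.finite_toSet.image (fun x => -(∑ k, w k * x k))).bddAbove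
  have hc : ∀ x ∈ S, 0 < (∑ k, w k * x k) + (M + 1) := by
    intro x hx
    have : -(∑ k, w k * x k) ≤ M := hM ⟨x, hx, rfl⟩
    linarith
  refine ⟨fun x _ => max 0 ((∑ k, w k * x k) + (M + 1)),
    ⟨fun _ k => w k, fun _ => M + 1, fun x i => rfl⟩, ?_⟩
  intro x hx y hy hxy
  have h1 : max 0 ((∑ k, w k * x k) + (M + 1)) = max 0 ((∑ k, w k * y k) + (M + 1)) :=
    congrFun hxy ⟨0, hq⟩
  rw [max_eq_right (hc x hx).le, max_eq_right (hc y hy).le] at h1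
  exact hw x hx y hy (by linarith)

noncomputable def layerMap (p q : ℕ) (hq : 0 < q) (S : Finset (Fin p → ℝ)) :
    (Fin p → ℝ) → (Fin q → ℝ) := (layer_exists p q hq S).choose

lemma layerMap_form (p q : ℕ) (hq : 0 < q) (S : Finset (Fin p → ℝ)) :
    ∃ (W : Fin q → Fin p → ℝ) (b : Fin q → ℝ),
      ∀ x i, layerMap p q hq S x i = max 0 (∑ k, W i k * x k + b i) :=
  (layer_exists p q hq S).choose_spec.1

lemma layerMap_inj (p q : ℕ) (hq : 0 < q) (S : Finset (Fin p → ℝ)) :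
    Set.InjOn (layerMap p q hq S) S :=
  (layer_exists p q hq S).choose_spec.2

theorem stmt10 (m d n_e : ℕ) (hm : 2 ≤ m) (hne : 1 ≤ n_e) (hnem : n_e < m)
    (n : Fin (d + 2) → ℕ) (h0 : n 0 = m) (hlast : n (Fin.last (d + 1)) = n_e)
    (hchain : ∀ j : Fin (d + 1), n j.succ < n j.castSucc)
    (D : Finset (Fin (n 0) → ℝ)) :
    ∃ (f : ∀ j : Fin (d + 1), (Fin (n j.castSucc) → ℝ) → (Fin (n j.succ) → ℝ))
      (F : ∀ j : Fin (d + 2), (Fin (n 0) → ℝ) → (Fin (n j) → ℝ)),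
      (∀ j : Fin (d + 1), ∃ (W : Fin (n j.succ) → Fin (n j.castSucc) → ℝ)
          (b : Fin (n j.succ) → ℝ),
          ∀ x i, f j x i = max 0 (∑ k, W i k * x k + b i)) ∧
      (∀ x, F 0 x = x) ∧
      (∀ j : Fin (d + 1), ∀ x, F j.succ x = f j (F j.castSucc x)) ∧
      Set.InjOn (F (Fin.last (d + 1))) D := by
  have hle : ∀ j : Fin (d + 2), n_e ≤ n j := by
    intro j
    induction j using Fin.reverseInduction with
    | last => rw [hlast]
    | cast j ih => exact ih.trans (hchain j).le
  have hpos : ∀ j : Fin (d + 2), 0 < n j := fun j => lt_of_lt_of_le hne (hle j)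
  set F : ∀ j : Fin (d + 2), (Fin (n 0) → ℝ) → (Fin (n j) → ℝ) :=
    Fin.induction (fun x => x)
      (fun j Fj => fun x =>
        layerMap (n j.castSucc) (n j.succ) (hpos j.succ) (D.image Fj) (Fj x)) with hF
  have hstep : ∀ j : Fin (d + 1), ∀ x, F j.succ x =
      layerMap (n j.castSucc) (n j.succ) (hpos j.succ) (D.image (F j.castSucc))
        (F j.castSucc x) := by
    intro j x
    simp only [hF, Fin.induction_succ]
  refine ⟨fun j => layerMap (n j.castSucc) (n j.succ) (hpos j.succ) (D.image (F j.castSucc)),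
    F, fun j => layerMap_form _ _ _ _, fun x => by simp only [hF, Fin.induction_zero], hstep, ?_⟩
  have key : ∀ j : Fin (d + 2), Set.InjOn (F j) D := by
    intro j
    induction j using Fin.induction with
    | zero =>
      intro x hx y hy hxy
      simpa only [hF, Fin.induction_zero] using hxy
    | succ j ih =>
      intro x hx y hy hxy
      rw [hstep j x, hstep j y] at hxy
      have h1 := layerMap_inj (n j.castSucc) (n j.succ) (hpos j.succ)
        (D.image (F j.castSucc))
        (Finset.mem_coe.mpr (Finset.mem_image_of_mem _ hx))
        (Finset.mem_coe.mpr (Finset.mem_image_of_mem _ hy)) hxy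
      exact ih hx hy h1
  exact key (Fin.last (d + 1))
end
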